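/- Let Ω₂ = {(w,z) ∈ ℂ² : Re w + z² + z̄² + |z|⁴ < 0}, p = (-1,0), ψ(w,z) = (w − 2z², z), φⱼ(w,z) = (w/j⁴, z/j), and φ̃ⱼ := ψ ∘ φⱼ ∘ ψ⁻¹. Then the Frankel scaling map with respect to (p, φ̃ⱼ) is ωⱼ(w,z) = (w + 2(1−j²)z² + 1, z), and every subsequence of {ωⱼ} diverges (fails to converge uniformly on any nonempty open subset of Ω₂). -/

import Mathlib

open Complex Filter Topology

/-!
In the coordinates `ψ`, the conjugated dilation `φ̃ⱼ = ψ ∘ φⱼ ∘ ψ⁻¹` is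
`(w, z) ↦ (w / j⁴ + 2(1 - j²) z² / j⁴, z / j)`. Its differential at `p = (-1, 0)` is the diagonal
map `(w, z) ↦ (w / j⁴, z / j)`, because the quadratic term has zero differential on `z = 0`;
inverting it gives the formula for `ωⱼ`. At any point with `z ≠ 0` the coefficient `2(1 - j²)`
makes `|ωⱼ|` grow like `j²`, so no subsequence converges even pointwise, and points with `z ≠ 0`
lie in every nonempty open set.
-/

def quadShear (a b c : ℂ) (p : ℂ × ℂ) : ℂ × ℂ := (a * p.1 + b * p.2 ^ 2, c * p.2)

theorem hasFDerivAt_quadShear (a b c w : ℂ) :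
    HasFDerivAt (quadShear a b c)
      ((a • ContinuousLinearMap.fst ℂ ℂ ℂ).prod (c • ContinuousLinearMap.snd ℂ ℂ ℂ)) (w, 0) := by
  have h := (((hasFDerivAt_fst (𝕜 := ℂ) (p := (w, (0 : ℂ)))).const_mul a).add
    ((hasFDerivAt_snd.pow 2).const_mul b)).prodMk (hasFDerivAt_snd.const_mul c)
  refine h.congr_fderiv ?_
  ext <;> simp

theorem conj_dilation_eq_quadShear {j : ℂ} (hj : j ≠ 0) :
    (fun p : ℂ × ℂ => (p.1 - 2 * p.2 ^ 2, p.2)) ∘ (fun p : ℂ × ℂ => (p.1 / j ^ 4, p.2 / j)) ∘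
        (fun p : ℂ × ℂ => (p.1 + 2 * p.2 ^ 2, p.2)) =
      quadShear (j ^ 4)⁻¹ (2 * (1 - j ^ 2) / j ^ 4) j⁻¹ := by
  funext p
  simp only [Function.comp_apply, quadShear, Prod.mk.injEq]
  constructor
  · field_simp
    ring
  · field_simp

theorem quadShear_frankel_identity (j : ℂ) (q : ℂ × ℂ) :
    ((((j ^ 4)⁻¹ : ℂ) • ContinuousLinearMap.fst ℂ ℂ ℂ).prod (j⁻¹ • ContinuousLinearMap.snd ℂ ℂ ℂ))
        (q.1 + 2 * (1 - j ^ 2) * q.2 ^ 2 + 1, q.2) =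
      quadShear (j ^ 4)⁻¹ (2 * (1 - j ^ 2) / j ^ 4) j⁻¹ q -
        quadShear (j ^ 4)⁻¹ (2 * (1 - j ^ 2) / j ^ 4) j⁻¹ (-1, 0) := by
  simp only [ContinuousLinearMap.prod_apply, smul_apply,
    ContinuousLinearMap.coe_fst', ContinuousLinearMap.coe_snd', smul_eq_mul, quadShear,
    Prod.mk_sub_mk, Prod.mk.injEq]
  constructor <;> ring

theorem exists_mem_snd_ne_of_isOpen {X Y : Type*} [TopologicalSpace X] [TopologicalSpace Y]
    (y : Y) [(𝓝[≠] y).NeBot] {U : Set (X × Y)} (hU : IsOpen U) (hne : U.Nonempty) :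
    ∃ q ∈ U, q.2 ≠ y := by
  obtain ⟨q, hqU, -, hq⟩ :=
    (dense_univ.prod (dense_compl_singleton y)).inter_open_nonempty U hU hne
  exact ⟨q, hqU, hq⟩

theorem tendsto_norm_add_mul_natCast_sq_atTop {𝕜 : Type*} [RCLike 𝕜] (a b : 𝕜) (hb : b ≠ 0) :
    Tendsto (fun n : ℕ => ‖a + b * (n : 𝕜) ^ 2‖) atTop atTop := by
  have hlower : ∀ n : ℕ, ‖b‖ * (n : ℝ) ^ 2 + -‖a‖ ≤ ‖a + b * (n : 𝕜) ^ 2‖ := fun n => by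
    have := norm_sub_norm_le (b * (n : 𝕜) ^ 2) (-a)
    rw [norm_neg, norm_mul, norm_pow, RCLike.norm_natCast, sub_neg_eq_add, add_comm] at this
    linarith
  refine tendsto_atTop_mono hlower (tendsto_atTop_add_const_right _ _ ?_)
  exact ((tendsto_pow_atTop two_ne_zero).comp tendsto_natCast_atTop_atTop).const_mul_atTop
    (norm_pos_iff.mpr hb)

theorem not_tendstoUniformlyOn_of_tendsto_norm_atTop {ι α E : Type*} [NormedAddCommGroup E]
    {l : Filter ι} [l.NeBot] {F : ι → α → E} {U : Set α} {x : α} (hx : x ∈ U)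
    (hF : Tendsto (fun n => ‖F n x‖) l atTop) : ¬ ∃ g, TendstoUniformlyOn F g l U := by
  rintro ⟨g, hg⟩
  exact not_tendsto_atTop_of_tendsto_nhds (hg.tendsto_at hx).norm hF

theorem tendsto_norm_frankel_atTop {q : ℂ × ℂ} (hq : q.2 ≠ 0) :
    Tendsto (fun j : ℕ => ‖((q.1 + 2 * (1 - (j : ℂ) ^ 2) * q.2 ^ 2 + 1, q.2) : ℂ × ℂ)‖)
      atTop atTop := by
  refine tendsto_atTop_mono (fun j => (norm_fst_le _).trans_eq' ?_)
    (tendsto_norm_add_mul_natCast_sq_atTop (q.1 + 2 * q.2 ^ 2 + 1) (-2 * q.2 ^ 2)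
      (by simpa using hq))
  ring_nf

/-- On `Ω₂ = {Re w + z² + z̄² + |z|⁴ < 0}` with `p = (-1,0)`,
`ψ(w,z) = (w − 2z², z)`, `φⱼ(w,z) = (w/j⁴, z/j)` and `φ̃ⱼ = ψ ∘ φⱼ ∘ ψ⁻¹`, the Frankel
scaling map with respect to `(p, φ̃ⱼ)` is `ωⱼ(w,z) = (w + 2(1−j²)z² + 1, z)` (encoded via
`dφ̃ⱼ|ₚ (ωⱼ q) = φ̃ⱼ q − φ̃ⱼ p`), and every subsequence of `{ωⱼ}` fails to converge
uniformly on any nonempty open subset of `Ω₂`. -/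
theorem frankel_stmt3
    (ψ : ℂ × ℂ → ℂ × ℂ) (hψ : ∀ p : ℂ × ℂ, ψ p = (p.1 - 2 * p.2 ^ 2, p.2))
    (ψinv : ℂ × ℂ → ℂ × ℂ) (hψinv : ∀ p : ℂ × ℂ, ψinv p = (p.1 + 2 * p.2 ^ 2, p.2))
    (φ : ℕ → ℂ × ℂ → ℂ × ℂ)
    (hφ : ∀ j, ∀ p : ℂ × ℂ, φ j p = (p.1 / (j : ℂ) ^ 4, p.2 / (j : ℂ)))
    (ω : ℕ → ℂ × ℂ → ℂ × ℂ)
    (hω : ∀ j, ∀ p : ℂ × ℂ, ω j p = (p.1 + 2 * (1 - (j : ℂ) ^ 2) * p.2 ^ 2 + 1, p.2)) :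
    (∀ j : ℕ, 0 < j → ∀ q : ℂ × ℂ,
        fderiv ℂ (ψ ∘ φ j ∘ ψinv) ((-1 : ℂ), (0 : ℂ)) (ω j q)
          = (ψ ∘ φ j ∘ ψinv) q - (ψ ∘ φ j ∘ ψinv) ((-1 : ℂ), (0 : ℂ))) ∧
    (∀ s : ℕ → ℕ, StrictMono s →
      ∀ U : Set (ℂ × ℂ),
        U ⊆ {p : ℂ × ℂ | p.1.re + (p.2 ^ 2 + (starRingEnd ℂ p.2) ^ 2).re + ‖p.2‖ ^ 4 < 0} →
        IsOpen U → U.Nonempty →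
        ¬ ∃ g : ℂ × ℂ → ℂ × ℂ, TendstoUniformlyOn (fun n => ω (s n)) g atTop U) := by
  obtain rfl : ψ = _ := funext hψ
  obtain rfl : ψinv = _ := funext hψinv
  obtain rfl : φ = _ := funext fun j => funext (hφ j)
  obtain rfl : ω = _ := funext fun j => funext (hω j)
  refine ⟨fun j hj q => ?_, fun s hs U _ hU hne => ?_⟩
  · rw [conj_dilation_eq_quadShear (Nat.cast_ne_zero.mpr hj.ne'),
      (hasFDerivAt_quadShear _ _ _ _).fderiv]
    exact quadShear_frankel_identity _ q
  · obtain ⟨q, hqU, hq⟩ := exists_mem_snd_ne_of_isOpen (0 : ℂ) hU hne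
    exact not_tendstoUniformlyOn_of_tendsto_norm_atTop hqU
      ((tendsto_norm_frankel_atTop hq).comp hs.tendsto_atTop)
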